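/- arXiv:1205.0101 — 5 statements merged into one kernel-verified Lean document; each statement's English description precedes it below -/
import Mathlib

section
/- Let (T, κ) be a monoidal monad on a monoidal category C and let (A,a), (B,b), (C,c) be T-algebras. A morphism f : A ⊗ B → C in C is a bimorphism (i.e. c · Tf · κ_{A,B} = f · (a ⊗ b)) if and only if both c · Tf · κ_{A,B} · (η_A ⊗ 1_{TB}) = f · (1_A ⊗ b) and c · Tf · κ_{A,B} · (1_{TA} ⊗ η_B) = f · (a ⊗ 1_B) hold. -/
open CategoryTheory Category MonoidalCategory Limits

universe v u

variable {C : Type u} [Category.{v} C] [MonoidalCategory C]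

/-- A monoidal-monad structure on a monad `T`: a natural family
`κ X Y : T X ⊗ T Y ⟶ T (X ⊗ Y)` making `(T, η_E, κ)` a monoidal functor and
compatible with the multiplication and unit of the monad. -/
structure MonoidalMonadStr (T : Monad C) where
  κ : ∀ X Y : C, T.obj X ⊗ T.obj Y ⟶ T.obj (X ⊗ Y)
  natural : ∀ {X Y X' Y' : C} (f : X ⟶ X') (g : Y ⟶ Y'),
      (T.map f ⊗ₘ T.map g) ≫ κ X' Y' = κ X Y ≫ T.map (f ⊗ₘ g)
  assoc : ∀ X Y Z : C,
      (α_ (T.obj X) (T.obj Y) (T.obj Z)).hom ≫ (𝟙 (T.obj X) ⊗ₘ κ Y Z) ≫ κ X (Y ⊗ Z)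
        = (κ X Y ⊗ₘ 𝟙 (T.obj Z)) ≫ κ (X ⊗ Y) Z ≫ T.map (α_ X Y Z).hom
  left_unit : ∀ X : C,
      (T.η.app (𝟙_ C) ⊗ₘ 𝟙 (T.obj X)) ≫ κ (𝟙_ C) X ≫ T.map (λ_ X).hom = (λ_ (T.obj X)).hom
  right_unit : ∀ X : C,
      (𝟙 (T.obj X) ⊗ₘ T.η.app (𝟙_ C)) ≫ κ X (𝟙_ C) ≫ T.map (ρ_ X).hom = (ρ_ (T.obj X)).hom
  mu : ∀ X Y : C,
      κ (T.obj X) (T.obj Y) ≫ T.map (κ X Y) ≫ T.μ.app (X ⊗ Y)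
        = (T.μ.app X ⊗ₘ T.μ.app Y) ≫ κ X Y
  unit : ∀ X Y : C, (T.η.app X ⊗ₘ T.η.app Y) ≫ κ X Y = T.η.app (X ⊗ Y)

/-- `f : A ⊗ B ⟶ C` is a bimorphism of `T`-algebras. -/
def IsBimorphism {T : Monad C} (κ : MonoidalMonadStr T) {A B Cc : Monad.Algebra T}
    (f : A.A ⊗ B.A ⟶ Cc.A) : Prop :=
  κ.κ A.A B.A ≫ T.map f ≫ Cc.a = (A.a ⊗ₘ B.a) ≫ f

/-! Write `f̂ = κ ≫ T f ≫ c`. Since `a ⊗ b = (1 ⊗ b) ≫ (a ⊗ 1)`, the second equation turns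
`(a ⊗ b) ≫ f` into `(1 ⊗ b ≫ η) ≫ f̂ = (1 ⊗ η) ≫ (1 ⊗ T b) ≫ f̂`. Naturality of `κ` and the
first equation rewrite `(1 ⊗ T b) ≫ f̂` as `(T η ⊗ 1) ≫ κ ≫ T f̂ ≫ c`, and compatibility of `κ`
with `μ` makes this `(T η ⊗ 1) ≫ (μ ⊗ μ) ≫ f̂`. The unit laws `T η ≫ μ = 1 = η ≫ μ` leave `f̂`. -/

namespace MonoidalMonadStr

variable {T : Monad C} (κ : MonoidalMonadStr T)

/-- The bimorphism of free algebras `T X ⊗ T Y ⟶ Cc` restricting to `h` along `η ⊗ η`. -/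
def extend {X Y : C} {Cc : Monad.Algebra T} (h : X ⊗ Y ⟶ Cc.A) : T.obj X ⊗ T.obj Y ⟶ Cc.A :=
  κ.κ X Y ≫ T.map h ≫ Cc.a

variable {X Y X' Y' : C} {Cc : Monad.Algebra T}

theorem tensorHom_map_comp_extend (u : X ⟶ X') (v : Y ⟶ Y') (h : X' ⊗ Y' ⟶ Cc.A) :
    (T.map u ⊗ₘ T.map v) ≫ κ.extend h = κ.extend ((u ⊗ₘ v) ≫ h) := by
  rw [extend, reassoc_of% (κ.natural u v), extend, T.map_comp, Category.assoc]

theorem extend_extend (h : X ⊗ Y ⟶ Cc.A) :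
    κ.extend (κ.extend h) = (T.μ.app X ⊗ₘ T.μ.app Y) ≫ κ.extend h := by
  calc κ.extend (κ.extend h)
      = κ.κ (T.obj X) (T.obj Y) ≫ T.map (κ.κ X Y) ≫ T.map (T.map h) ≫ T.μ.app Cc.A ≫ Cc.a := by
        simp only [extend, T.map_comp, Category.assoc, Cc.assoc]
    _ = (κ.κ (T.obj X) (T.obj Y) ≫ T.map (κ.κ X Y) ≫ T.μ.app (X ⊗ Y)) ≫ T.map h ≫ Cc.a := by
        simp only [Category.assoc, T.mu_naturality_assoc]
    _ = (T.μ.app X ⊗ₘ T.μ.app Y) ≫ κ.extend h := by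
        rw [κ.mu, Category.assoc]; rfl

end MonoidalMonadStr

namespace IsBimorphism

variable {T : Monad C} {κ : MonoidalMonadStr T} {A B Cc : Monad.Algebra T}
  {f : A.A ⊗ B.A ⟶ Cc.A}

theorem unit_left (hf : IsBimorphism κ f) :
    (T.η.app A.A ⊗ₘ 𝟙 (T.obj B.A)) ≫ κ.extend f = (𝟙 A.A ⊗ₘ B.a) ≫ f := by
  rw [MonoidalMonadStr.extend, hf, tensorHom_comp_tensorHom_assoc, A.unit, id_comp]

theorem unit_right (hf : IsBimorphism κ f) :
    (𝟙 (T.obj A.A) ⊗ₘ T.η.app B.A) ≫ κ.extend f = (A.a ⊗ₘ 𝟙 B.A) ≫ f := by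
  rw [MonoidalMonadStr.extend, hf, tensorHom_comp_tensorHom_assoc, B.unit, id_comp]

theorem of_unit_left_of_unit_right
    (hl : (T.η.app A.A ⊗ₘ 𝟙 (T.obj B.A)) ≫ κ.extend f = (𝟙 A.A ⊗ₘ B.a) ≫ f)
    (hr : (𝟙 (T.obj A.A) ⊗ₘ T.η.app B.A) ≫ κ.extend f = (A.a ⊗ₘ 𝟙 B.A) ≫ f) :
    IsBimorphism κ f := by
  have extend_along_b : (𝟙 (T.obj A.A) ⊗ₘ T.map B.a) ≫ κ.extend f
      = (T.map (T.η.app A.A) ⊗ₘ 𝟙 (T.obj (T.obj B.A))) ≫ (T.μ.app A.A ⊗ₘ T.μ.app B.A) ≫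
          κ.extend f := by
    rw [← T.map_id, κ.tensorHom_map_comp_extend, ← hl, ← κ.tensorHom_map_comp_extend, T.map_id,
      κ.extend_extend]
  show κ.extend f = (A.a ⊗ₘ B.a) ≫ f
  symm
  calc (A.a ⊗ₘ B.a) ≫ f
      = (𝟙 _ ⊗ₘ B.a) ≫ (𝟙 _ ⊗ₘ T.η.app B.A) ≫ κ.extend f := by
        rw [hr, tensorHom_comp_tensorHom_assoc, id_comp, comp_id]
    _ = (𝟙 _ ⊗ₘ T.η.app (T.obj B.A)) ≫ (𝟙 _ ⊗ₘ T.map B.a) ≫ κ.extend f := by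
        rw [tensorHom_comp_tensorHom_assoc, tensorHom_comp_tensorHom_assoc, id_comp,
          T.unit_naturality]
    _ = κ.extend f := by
        rw [extend_along_b, tensorHom_comp_tensorHom_assoc, tensorHom_comp_tensorHom_assoc,
          id_comp, comp_id, T.right_unit, T.left_unit]
        exact (id_tensorHom_id _ _ =≫ _).trans (id_comp _)

end IsBimorphism

/-- `f` is a bimorphism iff it is a `T`-algebra homomorphism
in each variable separately. -/
theorem bimorphism_iff_homomorphism_in_each_variable
    (T : Monad C) (κ : MonoidalMonadStr T) (A B Cc : Monad.Algebra T)
    (f : A.A ⊗ B.A ⟶ Cc.A) :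
    IsBimorphism κ f ↔
      ((T.η.app A.A ⊗ₘ 𝟙 (T.obj B.A)) ≫ κ.κ A.A B.A ≫ T.map f ≫ Cc.a
          = (𝟙 A.A ⊗ₘ B.a) ≫ f) ∧
      ((𝟙 (T.obj A.A) ⊗ₘ T.η.app B.A) ≫ κ.κ A.A B.A ≫ T.map f ≫ Cc.a
          = (A.a ⊗ₘ 𝟙 B.A) ≫ f) :=
  ⟨fun hf => ⟨hf.unit_left, hf.unit_right⟩,
    fun ⟨hl, hr⟩ => .of_unit_left_of_unit_right hl hr⟩
end

section
/- Let (T, κ) be a monoidal monad on a monoidal category C, (A,a) and (B,b) T-algebras, and f : T(A⊗B) → C a morphism. Then f coequalizes the pair (μ_{A⊗B}·Tκ_{A,B}, T(a⊗b)) if and only if f coequalizes the pair (μ_{A⊗B}·T(κ_{A,B}·(η_A·a ⊗ 1_{TB})), μ_{A⊗B}·T(κ_{A,B}·(1_{TA} ⊗ η_B·b))), both pairs having domain T(TA⊗TB). -/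
open CategoryTheory Category MonoidalCategory Limits

universe v u

variable {C : Type u} [Category.{v} C] [MonoidalCategory C]

/-!
Write `u♯ = μ ∘ T u` for the Kleisli extension, `e₁ = κ ∘ (η a ⊗ 1)` and `e₂ = κ ∘ (1 ⊗ η b)`.
Then `e₁♯ = κ♯ ∘ T(η a ⊗ 1)` and `e₂♯ = κ♯ ∘ T(1 ⊗ η b)`, and since `a ∘ η = 1 = b ∘ η`, a map
coequalizing `(κ♯, T(a ⊗ b))` coequalizes `(e₁♯, e₂♯)`. Conversely, `w = κ ∘ (η ⊗ T η)` satisfies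
`e₁♯ ∘ w = e₁` and `e₂♯ ∘ w = κ`, so by associativity of Kleisli composition `f ∘ e₁♯ = f ∘ e₂♯`
forces `f ∘ e₁♯ = f ∘ κ♯`; and precomposing with `T(1 ⊗ η b)` fixes `e₂♯` and turns `e₁♯` into
`T(a ⊗ b)`.
-/

namespace CategoryTheory.Monad

variable {D : Type*} [Category D] (T : Monad D)

/-- The Kleisli extension `u♯ = μ ∘ T u` of `u : X ⟶ T Y`. -/
def bind {X Y : D} (u : X ⟶ T.obj Y) : T.obj X ⟶ T.obj Y :=
  T.map u ≫ T.μ.app Y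

lemma map_comp_bind {X Y Z : D} (h : X ⟶ Y) (u : Y ⟶ T.obj Z) :
    T.map h ≫ T.bind u = T.bind (h ≫ u) := by
  simp only [bind, Functor.map_comp, Category.assoc]

lemma η_comp_bind {X Y : D} (u : X ⟶ T.obj Y) : T.η.app X ≫ T.bind u = u := by
  rw [bind, ← T.η.naturality_assoc, Functor.id_map, T.left_unit, Category.comp_id]

lemma bind_η (X : D) : T.bind (T.η.app X) = 𝟙 _ :=
  T.right_unit X

lemma bind_comp_η {X Y : D} (h : X ⟶ Y) : T.bind (h ≫ T.η.app Y) = T.map h := by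
  rw [← map_comp_bind, bind_η]
  exact Category.comp_id _

lemma bind_comp_bind {X Y Z : D} (w : X ⟶ T.obj Y) (u : Y ⟶ T.obj Z) :
    T.bind w ≫ T.bind u = T.bind (w ≫ T.bind u) := by
  have hμ : T.map (T.map u) ≫ T.μ.app (T.obj Z) = T.μ.app Y ≫ T.map u := T.μ.naturality u
  simp only [bind, Functor.map_comp, Category.assoc, T.assoc, reassoc_of% hμ]

end CategoryTheory.Monad

namespace MonoidalMonadStr

section

variable {D : Type*} [Category D] [MonoidalCategory D] {T : Monad D} (κ : MonoidalMonadStr T)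

lemma κ_comp_bind_tensorHom {X Y X' Y' : D} (h₁ : T.obj X ⟶ T.obj X')
    (h₂ : T.obj Y ⟶ T.obj Y') :
    κ.κ (T.obj X) (T.obj Y) ≫ T.bind ((h₁ ⊗ₘ h₂) ≫ κ.κ X' Y') =
      (T.bind h₁ ⊗ₘ T.bind h₂) ≫ κ.κ X' Y' := by
  rw [Monad.bind, T.map_comp, Category.assoc, ← reassoc_of% (κ.natural h₁ h₂), κ.mu,
    tensorHom_comp_tensorHom_assoc, Monad.bind, Monad.bind]

lemma η_tensorHom_map_η_comp_κ_comp_bind_tensorHom {X Y X' Y' : D} (h₁ : T.obj X ⟶ T.obj X')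
    (h₂ : T.obj Y ⟶ T.obj Y') :
    (T.η.app (T.obj X) ⊗ₘ T.map (T.η.app Y)) ≫ κ.κ (T.obj X) (T.obj Y) ≫
        T.bind ((h₁ ⊗ₘ h₂) ≫ κ.κ X' Y') =
      (h₁ ⊗ₘ T.bind (T.η.app Y ≫ h₂)) ≫ κ.κ X' Y' := by
  rw [κ_comp_bind_tensorHom, tensorHom_comp_tensorHom_assoc, T.η_comp_bind, T.map_comp_bind]

end

section

variable {T : Monad C} (κ : MonoidalMonadStr T) (A B : Monad.Algebra T)

def leftAct : T.obj A.A ⊗ T.obj B.A ⟶ T.obj (A.A ⊗ B.A) :=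
  ((A.a ≫ T.η.app A.A) ⊗ₘ 𝟙 (T.obj B.A)) ≫ κ.κ A.A B.A

def rightAct : T.obj A.A ⊗ T.obj B.A ⟶ T.obj (A.A ⊗ B.A) :=
  (𝟙 (T.obj A.A) ⊗ₘ (B.a ≫ T.η.app B.A)) ≫ κ.κ A.A B.A

lemma bind_leftAct :
    T.bind (κ.leftAct A B) = T.map ((A.a ≫ T.η.app A.A) ⊗ₘ 𝟙 (T.obj B.A)) ≫ T.bind (κ.κ A.A B.A) :=
  (T.map_comp_bind _ _).symm

lemma bind_rightAct :
    T.bind (κ.rightAct A B) = T.map (𝟙 (T.obj A.A) ⊗ₘ (B.a ≫ T.η.app B.A)) ≫ T.bind (κ.κ A.A B.A) :=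
  (T.map_comp_bind _ _).symm

lemma tensorHom_η_comp_leftAct :
    (𝟙 (T.obj A.A) ⊗ₘ (B.a ≫ T.η.app B.A)) ≫ κ.leftAct A B = (A.a ⊗ₘ B.a) ≫ T.η.app _ := by
  rw [leftAct, tensorHom_comp_tensorHom_assoc, Category.id_comp, Category.comp_id,
    ← tensorHom_comp_tensorHom_assoc, κ.unit]

lemma tensorHom_η_comp_rightAct :
    (𝟙 (T.obj A.A) ⊗ₘ (B.a ≫ T.η.app B.A)) ≫ κ.rightAct A B = κ.rightAct A B := by
  rw [rightAct, tensorHom_comp_tensorHom_assoc, Category.id_comp, Category.assoc,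
    B.unit_assoc]

lemma η_tensorHom_map_η_comp_κ_comp_bind_leftAct :
    ((T.η.app (T.obj A.A) ⊗ₘ T.map (T.η.app B.A)) ≫ κ.κ (T.obj A.A) (T.obj B.A)) ≫
        T.bind (κ.leftAct A B) = κ.leftAct A B := by
  rw [leftAct, Category.assoc, η_tensorHom_map_η_comp_κ_comp_bind_tensorHom, Category.comp_id,
    T.bind_η]
  rfl

lemma η_tensorHom_map_η_comp_κ_comp_bind_rightAct :
    ((T.η.app (T.obj A.A) ⊗ₘ T.map (T.η.app B.A)) ≫ κ.κ (T.obj A.A) (T.obj B.A)) ≫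
        T.bind (κ.rightAct A B) = κ.κ A.A B.A := by
  rw [rightAct, Category.assoc, η_tensorHom_map_η_comp_κ_comp_bind_tensorHom, B.unit_assoc,
    T.bind_η, id_tensorHom_id]
  exact Category.id_comp _

end

end MonoidalMonadStr

/-- a morphism `f : T(A⊗B) ⟶ C` coequalizes `(μ·Tκ, T(a⊗b))`
iff it coequalizes `(μ·T(κ·(η·a ⊗ 1)), μ·T(κ·(1 ⊗ η·b)))`. -/
theorem coequalizes_iff_coequalizes
    (T : Monad C) (κ : MonoidalMonadStr T) (A B : Monad.Algebra T) {Z : C}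
    (f : T.obj (A.A ⊗ B.A) ⟶ Z) :
    (T.map (κ.κ A.A B.A) ≫ T.μ.app (A.A ⊗ B.A) ≫ f = T.map (A.a ⊗ₘ B.a) ≫ f) ↔
      (T.map (((A.a ≫ T.η.app A.A) ⊗ₘ 𝟙 (T.obj B.A)) ≫ κ.κ A.A B.A) ≫
            T.μ.app (A.A ⊗ B.A) ≫ f
        = T.map ((𝟙 (T.obj A.A) ⊗ₘ (B.a ≫ T.η.app B.A)) ≫ κ.κ A.A B.A) ≫
            T.μ.app (A.A ⊗ B.A) ≫ f) := by
  simp only [← Category.assoc]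
  change (T.bind (κ.κ A.A B.A) ≫ f = _) ↔
    T.bind (κ.leftAct A B) ≫ f = T.bind (κ.rightAct A B) ≫ f
  constructor
  · intro H
    rw [κ.bind_leftAct, κ.bind_rightAct, Category.assoc, Category.assoc, H,
      ← T.map_comp_assoc, ← T.map_comp_assoc, tensorHom_comp_tensorHom, tensorHom_comp_tensorHom]
    simp only [Category.assoc, A.unit, B.unit, Category.comp_id, Category.id_comp]
  · intro E
    obtain ⟨w, hw_left, hw_right⟩ : ∃ w, w ≫ T.bind (κ.leftAct A B) = κ.leftAct A B ∧
        w ≫ T.bind (κ.rightAct A B) = κ.κ A.A B.A :=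
      ⟨_, κ.η_tensorHom_map_η_comp_κ_comp_bind_leftAct A B,
        κ.η_tensorHom_map_η_comp_κ_comp_bind_rightAct A B⟩
    calc T.bind (κ.κ A.A B.A) ≫ f
        = T.bind w ≫ T.bind (κ.rightAct A B) ≫ f := by rw [reassoc_of% T.bind_comp_bind, hw_right]
      _ = T.bind w ≫ T.bind (κ.leftAct A B) ≫ f := by rw [E]
      _ = T.bind (κ.rightAct A B) ≫ f := by rw [reassoc_of% T.bind_comp_bind, hw_left, E]
      _ = T.map (𝟙 (T.obj A.A) ⊗ₘ (B.a ≫ T.η.app B.A)) ≫ T.bind (κ.rightAct A B) ≫ f := by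
          rw [reassoc_of% T.map_comp_bind, κ.tensorHom_η_comp_rightAct]
      _ = T.map (𝟙 (T.obj A.A) ⊗ₘ (B.a ≫ T.η.app B.A)) ≫ T.bind (κ.leftAct A B) ≫ f := by
          rw [E]
      _ = T.map (A.a ⊗ₘ B.a) ≫ f := by
          rw [reassoc_of% T.map_comp_bind, κ.tensorHom_η_comp_leftAct, T.bind_comp_η]
end

section
/- Let (T, κ) be a monoidal monad on a monoidal category C such that the tensor coequalizers q_{A,B} : T(A⊗B) → A ⊠ B exist in C^T. Then for T-algebras (A,a) and (B,b), q_{A,B} is also a coequalizer of the pair (μ·T(κ·(η·a ⊗ 1)), μ·T(κ·(1 ⊗ η·b))) : T(TA⊗TB) ⇉ T(A⊗B) in C^T. -/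
/-!
A `T`-algebra map `θ` out of the free algebra `T(A ⊗ B)` is determined by `θ·η`, so `θ`
coequalizes the tensor pair iff `φ := θ·κ` equals `θ·η·(a ⊗ b)`, and it coequalizes the Guitart
pair iff `φ·(η·a ⊗ 1) = φ·(1 ⊗ η·b)`. The first condition implies the second since `a·η·a = a`
and `b·η·b = b`. Conversely, through the strength `κ·(η ⊗ 1)` a map of the form `θ·κ·(f ⊗ 1)`
is determined by its restriction along `1 ⊗ η`. Restricted this way, the Guitart condition reads
`φ·(η·a ⊗ η) = φ·(1 ⊗ η)`, so `φ·(η·a ⊗ 1) = φ`, and hence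
`φ = φ·(η·a ⊗ η·b) = θ·η·(a ⊗ b)` by the unit axiom of `κ`. The two pairs thus have the same
coequalizing maps, hence the same coequalizers.
-/

open CategoryTheory Category MonoidalCategory Limits

universe v u

variable {C : Type u} [Category.{v} C] [MonoidalCategory C]

/-- The Kleisli extension `μ · T g : T X ⟶ T Y` of `g : X ⟶ T Y`, as a morphism of
free `T`-algebras. -/
def freeHom (T : Monad C) {X Y : C} (g : X ⟶ T.obj Y) :
    (Monad.free T).obj X ⟶ (Monad.free T).obj Y where
  f := T.map g ≫ T.μ.app Y
  h := by
    change T.map (T.map g ≫ T.μ.app Y) ≫ T.μ.app Y = T.μ.app X ≫ T.map g ≫ T.μ.app Y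
    rw [Functor.map_comp, Category.assoc, T.assoc Y, ← Category.assoc, ← Category.assoc]
    congr 1
    exact T.μ.naturality g

/-- The transpose `c · T f : T X ⟶ C` of `f : X ⟶ C`, as a morphism from the free
`T`-algebra on `X` to the algebra `(C, c)`. -/
def transHom (T : Monad C) {X : C} {Cc : Monad.Algebra T} (f : X ⟶ Cc.A) :
    (Monad.free T).obj X ⟶ Cc where
  f := T.map f ≫ Cc.a
  h := by
    change T.map (T.map f ≫ Cc.a) ≫ Cc.a = T.μ.app X ≫ T.map f ≫ Cc.a
    rw [Functor.map_comp, Category.assoc, ← Cc.assoc, ← Category.assoc, ← Category.assoc]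
    congr 1
    exact T.μ.naturality f

namespace CategoryTheory.Limits

def Cofork.IsColimit.ofπOfCoequalizes {D : Type*} [Category D] {X Y Q : D}
    {f g f' g' : X ⟶ Y} {q : Y ⟶ Q} {w : f ≫ q = g ≫ q} (w' : f' ≫ q = g' ≫ q)
    (H : ∀ {Z : D} (k : Y ⟶ Z), f' ≫ k = g' ≫ k → f ≫ k = g ≫ k)
    (hq : IsColimit (Cofork.ofπ q w)) : IsColimit (Cofork.ofπ q w') :=
  Cofork.IsColimit.mk _ (fun s => Cofork.IsColimit.desc hq s.π (H s.π s.condition))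
    (fun _ => Cofork.IsColimit.π_desc' hq _ _)
    (fun _ _ hm => Cofork.IsColimit.hom_ext hq (hm.trans (Cofork.IsColimit.π_desc' hq _ _).symm))

end CategoryTheory.Limits

namespace CategoryTheory.Monad

variable {D : Type*} [Category D]

lemma free_hom_ext {T : Monad D} {X : D} {Y : Algebra T} {h h' : (free T).obj X ⟶ Y}
    (e : T.η.app X ≫ h.f = T.η.app X ≫ h'.f) : h = h' :=
  ((adj T).homEquiv X Y).injective <| by
    simp only [Adjunction.homEquiv_unit, adj_unit, forget_map]
    exact e

lemma η_comp_map_comp_μ (T : Monad D) {X Y : D} (g : X ⟶ T.obj Y) :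
    T.η.app X ≫ T.map g ≫ T.μ.app Y = g := by
  rw [← T.η.naturality_assoc]
  simp

lemma unit_comp_free_map_comp_f {T : Monad D} {X Y : D} {Z : Algebra T} (u : X ⟶ Y)
    (h : (free T).obj Y ⟶ Z) : T.η.app X ≫ ((free T).map u ≫ h).f = u ≫ T.η.app Y ≫ h.f :=
  (T.η.naturality_assoc u h.f).symm

end CategoryTheory.Monad

section FreeHom

variable {D : Type*} [Category D] {T : Monad D}

lemma freeHom_comp {X Y W : D} (u : X ⟶ Y) (g : Y ⟶ T.obj W) :
    freeHom T (u ≫ g) = (Monad.free T).map u ≫ freeHom T g := by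
  ext
  change T.map (u ≫ g) ≫ T.μ.app W = T.map u ≫ T.map g ≫ T.μ.app W
  rw [T.map_comp, Category.assoc]

lemma unit_comp_freeHom_comp_f {X Y : D} {Z : Monad.Algebra T} (g : X ⟶ T.obj Y)
    (h : (Monad.free T).obj Y ⟶ Z) :
    T.η.app X ≫ (freeHom T g ≫ h).f = g ≫ h.f := by
  obtain ⟨θ, -⟩ := h
  -- `((Monad.free T).obj Y).A` is not reducibly `T.obj Y`; retyping `θ` lets `rw` work
  change T.obj Y ⟶ Z.A at θ
  change T.η.app X ≫ (T.map g ≫ T.μ.app Y) ≫ θ = g ≫ θ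
  rw [← Category.assoc, T.η_comp_map_comp_μ]

end FreeHom

lemma guitart_comp_eq_of_tensor_comp_eq {T : Monad C} {A B Z : Monad.Algebra T}
    (k : T.obj A.A ⊗ T.obj B.A ⟶ T.obj (A.A ⊗ B.A)) (h : (Monad.free T).obj (A.A ⊗ B.A) ⟶ Z)
    (w : freeHom T k ≫ h = (Monad.free T).map (A.a ⊗ₘ B.a) ≫ h) :
    freeHom T (((A.a ≫ T.η.app A.A) ⊗ₘ 𝟙 (T.obj B.A)) ≫ k) ≫ h
      = freeHom T ((𝟙 (T.obj A.A) ⊗ₘ (B.a ≫ T.η.app B.A)) ≫ k) ≫ h := by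
  rw [freeHom_comp, freeHom_comp, Category.assoc, Category.assoc, w, ← Functor.map_comp_assoc,
    ← Functor.map_comp_assoc, tensorHom_comp_tensorHom, tensorHom_comp_tensorHom]
  simp only [Category.assoc, A.unit, B.unit, Category.comp_id, Category.id_comp]

namespace MonoidalMonadStr

variable {T : Monad C} (κ : MonoidalMonadStr T)

def leftStrength (X Y : C) : X ⊗ T.obj Y ⟶ T.obj (X ⊗ Y) :=
  (T.η.app X ⊗ₘ 𝟙 (T.obj Y)) ≫ κ.κ X Y

lemma leftStrength_comp_kleisli {X Y X' Y' : C} (f : X ⟶ T.obj X') (g : Y ⟶ T.obj Y') :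
    κ.leftStrength X Y ≫ T.map ((f ⊗ₘ g) ≫ κ.κ X' Y') ≫ T.μ.app (X' ⊗ Y')
      = (f ⊗ₘ (T.map g ≫ T.μ.app Y')) ≫ κ.κ X' Y' := by
  rw [leftStrength, T.map_comp, Category.assoc, Category.assoc, ← reassoc_of% κ.natural, κ.mu,
    tensorHom_comp_tensorHom_assoc, tensorHom_comp_tensorHom_assoc, Category.id_comp,
    Category.assoc, T.η_comp_map_comp_μ]

variable {Z : Monad.Algebra T}

lemma tensorHom_id_comp_κ_comp_eq {X X' Y : C} {θ : T.obj (X' ⊗ Y) ⟶ Z.A}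
    (hθ : T.map θ ≫ Z.a = T.μ.app (X' ⊗ Y) ≫ θ) (f : X ⟶ T.obj X') :
    (f ⊗ₘ 𝟙 (T.obj Y)) ≫ κ.κ X' Y ≫ θ
      = κ.leftStrength X Y ≫ T.map ((f ⊗ₘ T.η.app Y) ≫ κ.κ X' Y ≫ θ) ≫ Z.a := by
  have strength := κ.leftStrength_comp_kleisli f (T.η.app Y)
  simp only [T.right_unit, Functor.map_comp, Category.assoc] at strength
  simp only [Functor.map_comp, Category.assoc, hθ, reassoc_of% strength]

lemma κ_comp_eq_of_balanced {A B : Monad.Algebra T} {θ : T.obj (A.A ⊗ B.A) ⟶ Z.A}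
    (hθ : T.map θ ≫ Z.a = T.μ.app (A.A ⊗ B.A) ≫ θ)
    (balanced : ((A.a ≫ T.η.app A.A) ⊗ₘ 𝟙 (T.obj B.A)) ≫ κ.κ A.A B.A ≫ θ
      = (𝟙 (T.obj A.A) ⊗ₘ (B.a ≫ T.η.app B.A)) ≫ κ.κ A.A B.A ≫ θ) :
    κ.κ A.A B.A ≫ θ = (A.a ⊗ₘ B.a) ≫ T.η.app (A.A ⊗ B.A) ≫ θ := by
  have absorb : ((A.a ≫ T.η.app A.A) ⊗ₘ 𝟙 (T.obj B.A)) ≫ κ.κ A.A B.A ≫ θ = κ.κ A.A B.A ≫ θ := by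
    have restricted := (𝟙 (T.obj A.A) ⊗ₘ T.η.app B.A) ≫= balanced
    simp only [tensorHom_comp_tensorHom_assoc, Category.id_comp, Category.comp_id,
      B.unit_assoc] at restricted
    rw [κ.tensorHom_id_comp_κ_comp_eq hθ, restricted, ← κ.tensorHom_id_comp_κ_comp_eq hθ,
      id_tensorHom_id, Category.id_comp]
  calc κ.κ A.A B.A ≫ θ
      = (𝟙 (T.obj A.A) ⊗ₘ (B.a ≫ T.η.app B.A)) ≫ κ.κ A.A B.A ≫ θ := by rw [← balanced, absorb]
    _ = (𝟙 (T.obj A.A) ⊗ₘ (B.a ≫ T.η.app B.A)) ≫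
          ((A.a ≫ T.η.app A.A) ⊗ₘ 𝟙 (T.obj B.A)) ≫ κ.κ A.A B.A ≫ θ := by rw [absorb]
    _ = (A.a ⊗ₘ B.a) ≫ (T.η.app A.A ⊗ₘ T.η.app B.A) ≫ κ.κ A.A B.A ≫ θ := by
        rw [tensorHom_comp_tensorHom_assoc, tensorHom_comp_tensorHom_assoc, Category.id_comp,
          Category.comp_id]
    _ = (A.a ⊗ₘ B.a) ≫ T.η.app (A.A ⊗ B.A) ≫ θ := by rw [reassoc_of% κ.unit]

lemma tensor_comp_eq_of_guitart_comp_eq {A B : Monad.Algebra T}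
    (h : (Monad.free T).obj (A.A ⊗ B.A) ⟶ Z)
    (hyp : freeHom T (((A.a ≫ T.η.app A.A) ⊗ₘ 𝟙 (T.obj B.A)) ≫ κ.κ A.A B.A) ≫ h
      = freeHom T ((𝟙 (T.obj A.A) ⊗ₘ (B.a ≫ T.η.app B.A)) ≫ κ.κ A.A B.A) ≫ h) :
    freeHom T (κ.κ A.A B.A) ≫ h = (Monad.free T).map (A.a ⊗ₘ B.a) ≫ h := by
  have balanced := congrArg (fun φ => T.η.app _ ≫ φ.f) hyp
  obtain ⟨θ, hθ⟩ := h
  change T.obj (A.A ⊗ B.A) ⟶ Z.A at θ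
  simp only [unit_comp_freeHom_comp_f, Category.assoc] at balanced
  apply Monad.free_hom_ext
  rw [unit_comp_freeHom_comp_f, Monad.unit_comp_free_map_comp_f]
  exact κ.κ_comp_eq_of_balanced hθ balanced

end MonoidalMonadStr

/-- if `q : T(A⊗B) ⟶ A ⊠ B` is the tensor-product coequalizer of
`(μ·Tκ, T(a⊗b))` in `C^T`, then it is also a coequalizer of
`(μ·T(κ·(η·a ⊗ 1)), μ·T(κ·(1 ⊗ η·b)))`. -/
theorem tensor_coequalizer_of_guitart_pair
    (T : Monad C) (κ : MonoidalMonadStr T) (A B : Monad.Algebra T)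
    {Q : Monad.Algebra T} (q : (Monad.free T).obj (A.A ⊗ B.A) ⟶ Q)
    (w : freeHom T (κ.κ A.A B.A) ≫ q = (Monad.free T).map (A.a ⊗ₘ B.a) ≫ q)
    (hq : Nonempty (IsColimit (Cofork.ofπ q w))) :
    ∃ w' : freeHom T (((A.a ≫ T.η.app A.A) ⊗ₘ 𝟙 (T.obj B.A)) ≫ κ.κ A.A B.A) ≫ q
         = freeHom T ((𝟙 (T.obj A.A) ⊗ₘ (B.a ≫ T.η.app B.A)) ≫ κ.κ A.A B.A) ≫ q,
      Nonempty (IsColimit (Cofork.ofπ q w')) := by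
  have w' := guitart_comp_eq_of_tensor_comp_eq _ q w
  exact ⟨w', hq.map (Cofork.IsColimit.ofπOfCoequalizes w' κ.tensor_comp_eq_of_guitart_comp_eq)⟩
end

section
/- Let (T, κ) be a monoidal monad on a monoidal category C and (A,a), (B,b), (C,c) T-algebras. A morphism f : A⊗B → C is a bimorphism if and only if c · Tf : T(A⊗B) → C coequalizes the pair (μ_{A⊗B}·Tκ_{A,B}, T(a⊗b)). -/
open CategoryTheory Category MonoidalCategory Limits

universe v u

variable {C : Type u} [Category.{v} C] [MonoidalCategory C]

/-!
For a `T`-algebra `(X, x)`, the map `g ↦ x · Tg` sends `g : Y ⟶ X` to its extension along the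
free algebra `(TY, μ_Y)`; it is injective, since precomposing with `η_Y` recovers `g`.
Being an algebra morphism, `c · Tf` turns `c · Tf · μ · Tκ` into `c · T(c · Tf · κ)`, so the
coequalizer equation is the image of the bimorphism equation under this injective map.
-/

namespace CategoryTheory.Monad.Algebra

variable {D : Type*} [Category D] {T : Monad D} (X : T.Algebra)

lemma unit_comp_map_comp_a {Y : D} (g : Y ⟶ X.A) : T.η.app Y ≫ T.map g ≫ X.a = g := by
  rw [← T.η.naturality_assoc, X.unit]
  exact Category.comp_id g

lemma μ_comp_map_comp_a {Y : D} (g : Y ⟶ X.A) :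
    T.μ.app Y ≫ T.map g ≫ X.a = T.map (T.map g ≫ X.a) ≫ X.a := by
  rw [← T.μ.naturality_assoc, Functor.comp_map, X.assoc, Functor.map_comp_assoc]

lemma map_comp_a_inj {Y : D} {g h : Y ⟶ X.A} :
    T.map g ≫ X.a = T.map h ≫ X.a ↔ g = h := by
  refine ⟨fun e => ?_, fun e => e ▸ rfl⟩
  rw [← X.unit_comp_map_comp_a g, e, X.unit_comp_map_comp_a]

end CategoryTheory.Monad.Algebra

/-- `f` is a bimorphism iff `c · Tf` coequalizes
`(μ_{A⊗B}·Tκ_{A,B}, T(a⊗b))`. -/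
theorem isBimorphism_iff_coequalizes
    (T : Monad C) (κ : MonoidalMonadStr T) (A B Cc : Monad.Algebra T)
    (f : A.A ⊗ B.A ⟶ Cc.A) :
    IsBimorphism κ f ↔
      (T.map (κ.κ A.A B.A) ≫ T.μ.app (A.A ⊗ B.A) ≫ T.map f ≫ Cc.a
        = T.map (A.a ⊗ₘ B.a) ≫ T.map f ≫ Cc.a) := by
  rw [Cc.μ_comp_map_comp_a, ← Functor.map_comp_assoc, ← Functor.map_comp_assoc,
    Cc.map_comp_a_inj, IsBimorphism]
end

section
/- A functor F : X × Y → Z preserves reflexive coequalizers if and only if the partial functors F(X, −) : Y → Z and F(−, Y) : X → Z preserve reflexive coequalizers for all objects X of X and Y of Y. -/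
open CategoryTheory Category Limits

universe v₁ v₂ v₃ u₁ u₂ u₃

/-- A functor preserves reflexive coequalizers: it sends any colimit cofork over a
reflexive pair to a colimit cocone. -/
def PreservesReflexiveCoequalizersP {X : Type u₁} [Category.{v₁} X]
    {Z : Type u₃} [Category.{v₃} Z] (F : X ⥤ Z) : Prop :=
  ∀ {A B : X} (f g : A ⟶ B), IsReflexivePair f g →
    ∀ c : Cofork f g, Nonempty (IsColimit c) → Nonempty (IsColimit (F.mapCocone c))

/-!
Coequalizers in `X × Y` are computed componentwise, so the sections `Prod.sectL X y` and
`Prod.sectR x Y` preserve them, and the partial functors of `F` inherit the property from `F`.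

Conversely, let `π : B ⟶ P` be a coequalizer of a reflexive pair `f, g : A ⟶ B` with common
section `σ`. Then `F π = F(π₁, B₂) ≫ F(P₁, π₂)`, where by hypothesis `F(π₁, y)` coequalizes
`F(f₁, y), F(g₁, y)` and `F(P₁, π₂)` coequalizes `F(P₁, f₂), F(P₁, g₂)`. A map `k` out of
`F B` with `F f ≫ k = F g ≫ k` satisfies `F(f₁, B₂) ≫ k = F(g₁, B₂) ≫ k` because
`(f₁, B₂) = (A₁, σ₂) ≫ f`, so it factors as `F(π₁, B₂) ≫ k'`; after the epimorphism
`F(π₁, A₂)` the section `σ₁` identifies `F(P₁, f₂) ≫ k'` with `F(P₁, g₂) ≫ k'`, so `k'`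
factors through `F(P₁, π₂)`.
-/

open scoped CategoryTheory.Prod

namespace CategoryTheory

variable {C D : Type*} [Category* C] [Category* D]

theorem IsReflexivePair.map (G : C ⥤ D) {A B : C} {f g : A ⟶ B} (h : IsReflexivePair f g) :
    IsReflexivePair (G.map f) (G.map g) :=
  IsReflexivePair.mk' (G.map (commonSection f g))
    (by rw [← G.map_comp, section_comp_left, G.map_id])
    (by rw [← G.map_comp, section_comp_right, G.map_id])

namespace Limits

theorem preservesColimit_parallelPair_of_isColimit_ofπ (G : C ⥤ D) {A B : C} {f g : A ⟶ B}
    (h : ∀ ⦃P : C⦄ (π : B ⟶ P) (w : f ≫ π = g ≫ π), IsColimit (Cofork.ofπ π w) →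
      Nonempty (IsColimit (G.mapCocone (Cofork.ofπ π w)))) :
    PreservesColimit (parallelPair f g) G where
  preserves {c} hc :=
    let e : c ≅ Cofork.ofπ (Cofork.π c) (Cofork.condition c) := Cofork.isoCoforkOfπ c
    (h _ _ (hc.ofIsoColimit e)).map (·.ofIsoColimit ((Cocone.functoriality _ G).mapIso e.symm))

section Product

variable {X Y : Type*} [Category* X] [Category* Y] {A B P : X × Y} {f g : A ⟶ B} {π : B ⟶ P}

theorem Cofork.nonempty_isColimit_fst (w : f ≫ π = g ≫ π) (hc : IsColimit (Cofork.ofπ π w)) :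
    Nonempty (IsColimit (Cofork.ofπ π.1 (congrArg (·.1) w) : Cofork f.1 g.1)) := by
  refine ⟨Cofork.IsColimit.mk' _ fun s => ?_⟩
  let d := Cofork.IsColimit.desc' hc (s.π ×ₘ π.2 : B ⟶ (s.pt, P.2))
    (Prod.hom_ext s.condition (congrArg (·.2) w :))
  refine ⟨d.1.1, congrArg (·.1) d.2, fun {m} hm => ?_⟩
  have : π ≫ (m ×ₘ 𝟙 P.2 : P ⟶ _) = s.π ×ₘ π.2 := Prod.hom_ext hm (comp_id _)
  exact (Prod.hom_ext_iff.1 (Cofork.IsColimit.hom_ext hc (this.trans d.2.symm))).1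

theorem Cofork.nonempty_isColimit_snd (w : f ≫ π = g ≫ π) (hc : IsColimit (Cofork.ofπ π w)) :
    Nonempty (IsColimit (Cofork.ofπ π.2 (congrArg (·.2) w) : Cofork f.2 g.2)) := by
  refine ⟨Cofork.IsColimit.mk' _ fun s => ?_⟩
  let d := Cofork.IsColimit.desc' hc (π.1 ×ₘ s.π : B ⟶ (P.1, s.pt))
    (Prod.hom_ext (congrArg (·.1) w :) s.condition)
  refine ⟨d.1.2, congrArg (·.2) d.2, fun {m} hm => ?_⟩
  have : π ≫ (𝟙 P.1 ×ₘ m : P ⟶ _) = π.1 ×ₘ s.π := Prod.hom_ext (comp_id _) hm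
  exact (Prod.hom_ext_iff.1 (Cofork.IsColimit.hom_ext hc (this.trans d.2.symm))).2

def Cofork.isColimitOfFstSnd (w : f ≫ π = g ≫ π)
    (h₁ : IsColimit (Cofork.ofπ π.1 (congrArg (·.1) w) : Cofork f.1 g.1))
    (h₂ : IsColimit (Cofork.ofπ π.2 (congrArg (·.2) w) : Cofork f.2 g.2)) :
    IsColimit (Cofork.ofπ π w) :=
  Cofork.IsColimit.mk' _ fun s =>
    let d₁ := Cofork.IsColimit.desc' h₁ s.π.1 (congrArg (·.1) s.condition)
    let d₂ := Cofork.IsColimit.desc' h₂ s.π.2 (congrArg (·.2) s.condition)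
    ⟨d₁.1 ×ₘ d₂.1, Prod.hom_ext d₁.2 d₂.2, fun hm =>
      Prod.hom_ext (Cofork.IsColimit.hom_ext h₁ ((congrArg (·.1) hm).trans d₁.2.symm))
        (Cofork.IsColimit.hom_ext h₂ ((congrArg (·.2) hm).trans d₂.2.symm))⟩

theorem preservesColimit_parallelPair_sectL (y : Y) {A B : X} (f g : A ⟶ B) :
    PreservesColimit (parallelPair f g) (Prod.sectL X y) :=
  preservesColimit_parallelPair_of_isColimit_ofπ _ fun _ _ w hc =>
    ⟨(isColimitMapCoconeCoforkEquiv _ w).symm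
      (Cofork.isColimitOfFstSnd _ hc (isColimitIdCofork rfl))⟩

theorem preservesColimit_parallelPair_sectR (x : X) {A B : Y} (f g : A ⟶ B) :
    PreservesColimit (parallelPair f g) (Prod.sectR x Y) :=
  preservesColimit_parallelPair_of_isColimit_ofπ _ fun _ _ w hc =>
    ⟨(isColimitMapCoconeCoforkEquiv _ w).symm
      (Cofork.isColimitOfFstSnd _ (isColimitIdCofork rfl) hc)⟩

end Product

section Bifunctor

variable {X Y Z : Type*} [Category* X] [Category* Y] [Category* Z] (F : X × Y ⥤ Z)
  {A B P : X × Y} {f g : A ⟶ B} {π : B ⟶ P}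

theorem map_eq_map_fst_comp_map_snd (π : B ⟶ P) :
    F.map π = F.map (π.1 ×ₘ 𝟙 B.2) ≫ F.map (𝟙 P.1 ×ₘ π.2) := by
  rw [← F.map_comp]
  exact congrArg F.map (Prod.hom_ext (comp_id _).symm (id_comp _).symm)

theorem exists_map_comp_eq_of_isReflexivePair (hr : IsReflexivePair f g)
    [∀ y, PreservesColimit (parallelPair f.1 g.1) (Prod.sectL X y ⋙ F)]
    [PreservesColimit (parallelPair f.2 g.2) (Prod.sectR P.1 Y ⋙ F)]
    (w : f ≫ π = g ≫ π) (hc : IsColimit (Cofork.ofπ π w)) {W : Z} (k : F.obj B ⟶ W)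
    (hk : F.map f ≫ k = F.map g ≫ k) : ∃ l : F.obj P ⟶ W, F.map π ≫ l = k := by
  obtain ⟨σ, hσf, hσg⟩ := hr.common_section'
  let e₁ (y : Y) := isColimitCoforkMapOfIsColimit (Prod.sectL X y ⋙ F) _
    (Cofork.nonempty_isColimit_fst w hc).some
  let e₂ := isColimitCoforkMapOfIsColimit (Prod.sectR P.1 Y ⋙ F) _
    (Cofork.nonempty_isColimit_snd w hc).some
  have sec₂ (φ : A ⟶ B) (hφ : σ ≫ φ = 𝟙 B) : (𝟙 A.1 ×ₘ σ.2) ≫ φ = φ.1 ×ₘ 𝟙 B.2 :=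
    Prod.hom_ext (id_comp _) (congrArg (·.2) hφ)
  have hk₁ : F.map (f.1 ×ₘ 𝟙 B.2) ≫ k = F.map (g.1 ×ₘ 𝟙 B.2) ≫ k := by
    rw [← sec₂ f hσf, ← sec₂ g hσg, F.map_comp_assoc, F.map_comp_assoc, hk]
  obtain ⟨k₁, hk₁⟩ : ∃ k₁ : F.obj (P.1, B.2) ⟶ W, F.map (π.1 ×ₘ 𝟙 B.2) ≫ k₁ = k :=
    ⟨_, (Cofork.IsColimit.desc' (e₁ B.2) k hk₁).2⟩
  have sec₁ (φ : A ⟶ B) (hφ : σ ≫ φ = 𝟙 B) :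
      F.map (π.1 ×ₘ 𝟙 A.2) ≫ F.map (𝟙 P.1 ×ₘ φ.2) ≫ k₁ =
        F.map (σ.1 ×ₘ 𝟙 A.2) ≫ F.map φ ≫ k := by
    have hφ₁ : σ.1 ≫ φ.1 = 𝟙 B.1 := congrArg (·.1) hφ
    rw [← hk₁]
    simp only [← F.map_comp_assoc]
    congr 2
    exact Prod.hom_ext (by simp [reassoc_of% hφ₁]) (by simp)
  have : Epi (F.map (π.1 ×ₘ 𝟙 A.2)) := epi_of_isColimit_cofork (e₁ A.2)
  have hk₂ : F.map (𝟙 P.1 ×ₘ f.2) ≫ k₁ = F.map (𝟙 P.1 ×ₘ g.2) ≫ k₁ := by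
    rw [← cancel_epi (F.map (π.1 ×ₘ 𝟙 A.2)), sec₁ f hσf, sec₁ g hσg, hk]
  obtain ⟨l, hl⟩ : ∃ l : F.obj P ⟶ W, F.map (𝟙 P.1 ×ₘ π.2) ≫ l = k₁ :=
    ⟨_, (Cofork.IsColimit.desc' e₂ k₁ hk₂).2⟩
  exact ⟨l, by rw [map_eq_map_fst_comp_map_snd, assoc, hl, hk₁]⟩

theorem epi_map_of_isColimit_cofork
    [PreservesColimit (parallelPair f.1 g.1) (Prod.sectL X B.2 ⋙ F)]
    [PreservesColimit (parallelPair f.2 g.2) (Prod.sectR P.1 Y ⋙ F)]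
    (w : f ≫ π = g ≫ π) (hc : IsColimit (Cofork.ofπ π w)) : Epi (F.map π) := by
  have : Epi (F.map (π.1 ×ₘ 𝟙 B.2)) := epi_of_isColimit_cofork <|
    isColimitCoforkMapOfIsColimit (Prod.sectL X B.2 ⋙ F) _ (Cofork.nonempty_isColimit_fst w hc).some
  have : Epi (F.map (𝟙 P.1 ×ₘ π.2)) := epi_of_isColimit_cofork <|
    isColimitCoforkMapOfIsColimit (Prod.sectR P.1 Y ⋙ F) _ (Cofork.nonempty_isColimit_snd w hc).some
  rw [map_eq_map_fst_comp_map_snd]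
  exact epi_comp _ _

theorem preservesColimit_parallelPair_of_sectL_sectR (hr : IsReflexivePair f g)
    [∀ y, PreservesColimit (parallelPair f.1 g.1) (Prod.sectL X y ⋙ F)]
    [∀ x, PreservesColimit (parallelPair f.2 g.2) (Prod.sectR x Y ⋙ F)] :
    PreservesColimit (parallelPair f g) F := by
  refine preservesColimit_parallelPair_of_isColimit_ofπ _ fun P π w hc => ?_
  have := epi_map_of_isColimit_cofork F w hc
  refine ⟨(isColimitMapCoconeCoforkEquiv F w).symm (Cofork.IsColimit.ofExistsUnique fun s => ?_)⟩
  obtain ⟨l, hl⟩ := exists_map_comp_eq_of_isReflexivePair F hr w hc s.π s.condition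
  exact ⟨l, hl, fun m hm => (cancel_epi (F.map π)).1 (hm.trans hl.symm)⟩

end Bifunctor

end Limits

end CategoryTheory

section Preservation

variable {C D E : Type*} [Category* C] [Category* D] [Category* E]

theorem preservesReflexiveCoequalizersP_iff (G : C ⥤ D) :
    PreservesReflexiveCoequalizersP G ↔ ∀ ⦃A B : C⦄ (f g : A ⟶ B), IsReflexivePair f g →
      PreservesColimit (parallelPair f g) G :=
  ⟨fun h _ _ f g hr => ⟨fun hc => h f g hr _ ⟨hc⟩⟩,
    fun h _ _ f g hr _ ⟨hc⟩ => (h f g hr).preserves hc⟩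

theorem PreservesReflexiveCoequalizersP.comp {G : C ⥤ D} {H : D ⥤ E}
    (hG : PreservesReflexiveCoequalizersP G) (hH : PreservesReflexiveCoequalizersP H) :
    PreservesReflexiveCoequalizersP (G ⋙ H) := by
  rw [preservesReflexiveCoequalizersP_iff] at *
  intro A B f g hr
  have := hG f g hr
  have := hH _ _ (hr.map G)
  have : PreservesColimit (parallelPair f g ⋙ G) H :=
    preservesColimit_of_iso_diagram (K₁ := parallelPair (G.map f) (G.map g)) H
      (diagramIsoParallelPair (parallelPair f g ⋙ G)).symm
  exact comp_preservesColimit G H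

end Preservation

/-- `F : X × Y ⥤ Z` preserves reflexive coequalizers iff all the
partial functors `F(X, −)` and `F(−, Y)` do. -/
theorem preservesReflexiveCoequalizers_prod_iff
    {X : Type u₁} [Category.{v₁} X] {Y : Type u₂} [Category.{v₂} Y]
    {Z : Type u₃} [Category.{v₃} Z] (F : X × Y ⥤ Z) :
    PreservesReflexiveCoequalizersP F ↔
      (∀ X₀ : X, PreservesReflexiveCoequalizersP (Prod.sectR X₀ Y ⋙ F)) ∧
      (∀ Y₀ : Y, PreservesReflexiveCoequalizersP (Prod.sectL X Y₀ ⋙ F)) := by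
  refine ⟨fun hF => ⟨fun x => ?_, fun y => ?_⟩, fun ⟨hR, hL⟩ => ?_⟩
  · refine PreservesReflexiveCoequalizersP.comp ?_ hF
    exact (preservesReflexiveCoequalizersP_iff _).2 fun _ _ f g _ =>
      preservesColimit_parallelPair_sectR x f g
  · refine PreservesReflexiveCoequalizersP.comp ?_ hF
    exact (preservesReflexiveCoequalizersP_iff _).2 fun _ _ f g _ =>
      preservesColimit_parallelPair_sectL y f g
  · refine (preservesReflexiveCoequalizersP_iff F).2 fun A B f g hr => ?_
    have (y : Y) : PreservesColimit (parallelPair f.1 g.1) (Prod.sectL X y ⋙ F) :=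
      (preservesReflexiveCoequalizersP_iff _).1 (hL y) _ _ (hr.map (CategoryTheory.Prod.fst X Y))
    have (x : X) : PreservesColimit (parallelPair f.2 g.2) (Prod.sectR x Y ⋙ F) :=
      (preservesReflexiveCoequalizersP_iff _).1 (hR x) _ _ (hr.map (CategoryTheory.Prod.snd X Y))
    exact preservesColimit_parallelPair_of_sectL_sectR F hr
end
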